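/- arXiv:2604.16819 — 2 statements merged into one kernel-verified Lean document; each statement's English description precedes it below -/
import Mathlib

section
/- Let z : [0,∞) → ℝ¹⁴ be differentiable and satisfy ż(t) = A z(t) + E d(t) for all t ≥ 0, where ‖d(t)‖ ≤ r̄ for all t ≥ 0. Set α = λ_min(Q), c = 2‖P·E‖, R = (c/α) r̄, and ρ* = λ_max(P) R². Then for every ρ ≥ ρ* and every t₀ ≥ 0 such that z(t₀) lies on the boundary level set V(z(t₀)) = ρ, the Lyapunov function is nonincreasing at t₀: d/dt [V(z(t))] evaluated at t = t₀ is ≤ 0. -/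
/-! Along a trajectory `d/dt V(z) = zᵀ(AᵀP + PA)z + 2 zᵀ(PE)d`. The Lyapunov inequality with
`zᵀQz ≥ λ_min(Q)‖z‖²` bounds the first term by `-α‖z‖²`, Cauchy–Schwarz bounds the second by
`c r̄ ‖z‖`. On a level set `V(z) = ρ ≥ λ_max(P) R²` we have `λ_max(P)‖z‖² ≥ V(z)`, hence
`‖z‖ ≥ R = c r̄ / α`, and so `d/dt V(z) ≤ ‖z‖ (c r̄ - α‖z‖) ≤ 0`. -/

open Matrix Filter

noncomputable section

abbrev V14 := EuclideanSpace ℝ (Fin 14)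
abbrev V3 := EuclideanSpace ℝ (Fin 3)

/-- Lyapunov function `V(z) = zᵀ P z`. -/
def lyapV (P : Matrix (Fin 14) (Fin 14) ℝ) (z : V14) : ℝ := z ⬝ᵥ P.mulVec z

/-- Right-hand side of the perturbed linear ODE `ż = A z + E d`, as an element of
Euclidean space. -/
def odeRHS (A : Matrix (Fin 14) (Fin 14) ℝ) (E : Matrix (Fin 14) (Fin 3) ℝ)
    (zt : V14) (dt : V3) : V14 := WithLp.toLp 2 (A.mulVec zt + E.mulVec dt)

/-- Operator norm of the matrix product `P·E` viewed as a linear map `ℝ³ → ℝ¹⁴`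
between Euclidean spaces. -/
def opPE (P : Matrix (Fin 14) (Fin 14) ℝ) (E : Matrix (Fin 14) (Fin 3) ℝ) : ℝ :=
  ‖LinearMap.toContinuousLinearMap (Matrix.toEuclideanLin (P * E))‖

/-- Smallest eigenvalue of a Hermitian (real symmetric) matrix. -/
def lamMin (Q : Matrix (Fin 14) (Fin 14) ℝ) (hQ : Q.IsHermitian) : ℝ := ⨅ i, hQ.eigenvalues i

/-- Largest eigenvalue of a Hermitian (real symmetric) matrix. -/
def lamMax (P : Matrix (Fin 14) (Fin 14) ℝ) (hP : P.IsHermitian) : ℝ := ⨆ i, hP.eigenvalues i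

open WithLp

namespace Matrix

section Quadratic

variable {n : Type*} [Fintype n]

lemma PosSemidef.dotProduct_mulVec_le_dotProduct_mulVec {M N : Matrix n n ℝ}
    (h : (N - M).PosSemidef) (x : n → ℝ) : x ⬝ᵥ M *ᵥ x ≤ x ⬝ᵥ N *ᵥ x := by
  have := h.dotProduct_mulVec_nonneg x
  rw [sub_mulVec, dotProduct_sub, star_trivial] at this
  linarith

variable [DecidableEq n] {M : Matrix n n ℝ} {μ : ℝ}

lemma IsHermitian.posSemidef_sub_smul_one (hM : M.IsHermitian) (h : ∀ i, μ ≤ hM.eigenvalues i) :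
    (M - μ • 1).PosSemidef := by
  rw [posSemidef_iff_isHermitian_and_spectrum_nonneg, ← Algebra.algebraMap_eq_smul_one,
    ← spectrum.sub_singleton_eq, hM.spectrum_real_eq_range_eigenvalues]
  refine ⟨hM.sub (by simp [IsHermitian, Algebra.algebraMap_eq_smul_one]), ?_⟩
  rintro _ ⟨_, ⟨i, rfl⟩, _, rfl, rfl⟩
  exact sub_nonneg.2 (h i)

lemma IsHermitian.posSemidef_smul_one_sub (hM : M.IsHermitian) (h : ∀ i, hM.eigenvalues i ≤ μ) :
    (μ • 1 - M).PosSemidef := by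
  rw [posSemidef_iff_isHermitian_and_spectrum_nonneg, ← Algebra.algebraMap_eq_smul_one,
    ← spectrum.singleton_sub_eq, hM.spectrum_real_eq_range_eigenvalues]
  refine ⟨(by simp [IsHermitian, Algebra.algebraMap_eq_smul_one] : IsHermitian _).sub hM, ?_⟩
  rintro _ ⟨_, rfl, _, ⟨i, rfl⟩, rfl⟩
  exact sub_nonneg.2 (h i)

lemma IsHermitian.mul_dotProduct_self_le_dotProduct_mulVec (hM : M.IsHermitian)
    (h : ∀ i, μ ≤ hM.eigenvalues i) (x : n → ℝ) : μ * (x ⬝ᵥ x) ≤ x ⬝ᵥ M *ᵥ x := by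
  simpa [smul_mulVec] using (hM.posSemidef_sub_smul_one h).dotProduct_mulVec_le_dotProduct_mulVec x

lemma IsHermitian.dotProduct_mulVec_le_mul_dotProduct_self (hM : M.IsHermitian)
    (h : ∀ i, hM.eigenvalues i ≤ μ) (x : n → ℝ) : x ⬝ᵥ M *ᵥ x ≤ μ * (x ⬝ᵥ x) := by
  simpa [smul_mulVec] using (hM.posSemidef_smul_one_sub h).dotProduct_mulVec_le_dotProduct_mulVec x

end Quadratic

lemma dotProduct_mulVec_add_add_dotProduct_mulVec {n m : Type*} [Fintype n] [Fintype m]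
    {P : Matrix n n ℝ} (hP : Pᵀ = P) (A : Matrix n n ℝ) (E : Matrix n m ℝ) (x : n → ℝ)
    (w : m → ℝ) :
    x ⬝ᵥ P *ᵥ (A *ᵥ x + E *ᵥ w) + (A *ᵥ x + E *ᵥ w) ⬝ᵥ P *ᵥ x
      = x ⬝ᵥ (Aᵀ * P + P * A) *ᵥ x + 2 * (x ⬝ᵥ (P * E) *ᵥ w) := by
  have hPx : (A *ᵥ x + E *ᵥ w) ⬝ᵥ P *ᵥ x = x ⬝ᵥ P *ᵥ (A *ᵥ x + E *ᵥ w) := by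
    rw [dotProduct_mulVec, ← mulVec_transpose, hP, dotProduct_comm]
  have hAx : x ⬝ᵥ P *ᵥ A *ᵥ x = x ⬝ᵥ Aᵀ *ᵥ P *ᵥ x := by
    rw [dotProduct_mulVec, dotProduct_mulVec x Aᵀ, vecMul_transpose, ← mulVec_transpose, hP,
      dotProduct_comm]
  rw [hPx, add_mulVec, dotProduct_add, ← mulVec_mulVec, ← mulVec_mulVec, ← mulVec_mulVec,
    mulVec_add, dotProduct_add, hAx]
  ring

end Matrix

namespace EuclideanSpace

variable {n : Type*} [Fintype n]

lemma real_inner_eq_dotProduct (x y : EuclideanSpace ℝ n) : inner ℝ x y = ofLp x ⬝ᵥ ofLp y := by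
  rw [inner_eq_star_dotProduct, dotProduct_comm]
  rfl

lemma dotProduct_self_eq_norm_sq (x : EuclideanSpace ℝ n) : ofLp x ⬝ᵥ ofLp x = ‖x‖ ^ 2 := by
  rw [← real_inner_eq_dotProduct, real_inner_self_eq_norm_sq]

lemma dotProduct_mulVec_le_norm_mul_opNorm_mul {m : Type*} [Fintype m] [DecidableEq m]
    (B : Matrix n m ℝ) (x : EuclideanSpace ℝ n) (w : EuclideanSpace ℝ m) :
    ofLp x ⬝ᵥ B *ᵥ ofLp w ≤ ‖x‖ * (‖(toEuclideanLin B).toContinuousLinearMap‖ * ‖w‖) := calc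
  ofLp x ⬝ᵥ B *ᵥ ofLp w = inner ℝ x ((toEuclideanLin B).toContinuousLinearMap w) := by
    rw [real_inner_eq_dotProduct]
    rfl
  _ ≤ ‖x‖ * ‖(toEuclideanLin B).toContinuousLinearMap w‖ := real_inner_le_norm _ _
  _ ≤ ‖x‖ * (‖(toEuclideanLin B).toContinuousLinearMap‖ * ‖w‖) :=
    mul_le_mul_of_nonneg_left (ContinuousLinearMap.le_opNorm _ _) (norm_nonneg _)

lemma hasDerivAt_dotProduct_mulVec [DecidableEq n] (M : Matrix n n ℝ)
    {z : ℝ → EuclideanSpace ℝ n} {z' : EuclideanSpace ℝ n} {t : ℝ} (hz : HasDerivAt z z' t) :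
    HasDerivAt (fun s => ofLp (z s) ⬝ᵥ M *ᵥ ofLp (z s))
      (ofLp (z t) ⬝ᵥ M *ᵥ ofLp z' + ofLp z' ⬝ᵥ M *ᵥ ofLp (z t)) t := by
  have hMz := (toEuclideanLin M).toContinuousLinearMap.hasFDerivAt.comp_hasDerivAt t hz
  have hV := hz.inner ℝ hMz
  simp only [real_inner_eq_dotProduct] at hV
  exact hV

end EuclideanSpace

section Eigenvalues

variable {P : Matrix (Fin 14) (Fin 14) ℝ}

lemma lamMin_le_eigenvalues (hP : P.IsHermitian) (i : Fin 14) : lamMin P hP ≤ hP.eigenvalues i :=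
  ciInf_le (Set.finite_range _).bddBelow i

lemma eigenvalues_le_lamMax (hP : P.IsHermitian) (i : Fin 14) : hP.eigenvalues i ≤ lamMax P hP :=
  le_ciSup (Set.finite_range _).bddAbove i

lemma lamMin_pos (hP : P.PosDef) : 0 < lamMin P hP.isHermitian := by
  obtain ⟨i, hi⟩ := exists_eq_ciInf_of_finite (f := hP.isHermitian.eigenvalues)
  rw [lamMin, ← hi]
  exact hP.eigenvalues_pos i

lemma lamMax_pos (hP : P.PosDef) : 0 < lamMax P hP.isHermitian :=
  (hP.eigenvalues_pos 0).trans_le (eigenvalues_le_lamMax _ 0)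

end Eigenvalues

theorem stmt5_general
    (A : Matrix (Fin 14) (Fin 14) ℝ) (E : Matrix (Fin 14) (Fin 3) ℝ)
    (P Q : Matrix (Fin 14) (Fin 14) ℝ) (hP : P.PosDef) (hQ : Q.PosDef)
    (hLyap : (-Q - (Aᵀ * P + P * A)).PosSemidef)
    (rbar : ℝ) (d : ℝ → V3) (hdbound : ∀ t, 0 ≤ t → ‖d t‖ ≤ rbar)
    (z : ℝ → V14)
    (hode : ∀ t, 0 ≤ t → HasDerivAt z (odeRHS A E (z t) (d t)) t)
    (α c R ρstar : ℝ)
    (hα : α = lamMin Q hQ.isHermitian) (hc : c = 2 * opPE P E)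
    (hR : R = (c / α) * rbar) (hρstar : ρstar = lamMax P hP.isHermitian * R ^ 2) :
    ∀ ρ, ρstar ≤ ρ → ∀ t₀, 0 ≤ t₀ → lyapV P (z t₀) = ρ →
      deriv (fun s => lyapV P (z s)) t₀ ≤ 0 := by
  intro ρ hρ t₀ ht₀ hVρ
  set x := ofLp (z t₀)
  set N := ‖z t₀‖
  have hPt : Pᵀ = P := by simpa using hP.isHermitian.eq
  have hV : HasDerivAt (fun s => lyapV P (z s)) _ t₀ :=
    EuclideanSpace.hasDerivAt_dotProduct_mulVec P (hode t₀ ht₀)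
  have hx : x ⬝ᵥ x = N ^ 2 := EuclideanSpace.dotProduct_self_eq_norm_sq _
  have hdecay : x ⬝ᵥ (Aᵀ * P + P * A) *ᵥ x ≤ -(α * N ^ 2) := by
    have hQx :=
      hQ.isHermitian.mul_dotProduct_self_le_dotProduct_mulVec (lamMin_le_eigenvalues _) x
    have := hLyap.dotProduct_mulVec_le_dotProduct_mulVec x
    rw [neg_mulVec, dotProduct_neg] at this
    rw [hα, ← hx]
    linarith
  have hcross : x ⬝ᵥ (P * E) *ᵥ ofLp (d t₀) ≤ N * (opPE P E * rbar) :=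
    (EuclideanSpace.dotProduct_mulVec_le_norm_mul_opNorm_mul _ _ _).trans <|
      mul_le_mul_of_nonneg_left (mul_le_mul_of_nonneg_left (hdbound t₀ ht₀) (norm_nonneg _))
        (norm_nonneg _)
  have hRN : R ≤ N := by
    have hPx := hP.isHermitian.dotProduct_mulVec_le_mul_dotProduct_self (eigenvalues_le_lamMax _) x
    rw [hx] at hPx
    refine le_of_sq_le_sq (le_of_mul_le_mul_left ?_ (lamMax_pos hP)) (norm_nonneg _)
    change lyapV P (z t₀) ≤ _ at hPx
    linarith
  have hαpos : 0 < α := hα ▸ lamMin_pos hQ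
  have hαR : α * R = c * rbar := by
    rw [hR]
    field_simp
  rw [hV.deriv, show ofLp (odeRHS A E (z t₀) (d t₀)) = A *ᵥ x + E *ᵥ ofLp (d t₀) from rfl,
    dotProduct_mulVec_add_add_dotProduct_mulVec hPt]
  calc _ ≤ -(α * N ^ 2) + 2 * (N * (opPE P E * rbar)) := by linarith
    _ = N * (c * rbar - α * N) := by rw [hc]; ring
    _ ≤ 0 := mul_nonpos_of_nonneg_of_nonpos (norm_nonneg _)
      (by rw [← hαR, sub_nonpos]; exact mul_le_mul_of_nonneg_left hRN hαpos.le)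

/-- With `α = λ_min(Q)`, `c = 2‖P·E‖`, `R = (c/α) r̄`,
`ρ* = λ_max(P) R²`: for every `ρ ≥ ρ*` and every `t₀ ≥ 0` with `V(z(t₀)) = ρ`,
the Lyapunov function is nonincreasing at `t₀`: `d/dt V(z(t))|_{t = t₀} ≤ 0`. -/
theorem stmt5
    (A : Matrix (Fin 14) (Fin 14) ℝ) (E : Matrix (Fin 14) (Fin 3) ℝ)
    (P Q : Matrix (Fin 14) (Fin 14) ℝ) (hP : P.PosDef) (hQ : Q.PosDef)
    (hLyap : (-Q - (Aᵀ * P + P * A)).PosSemidef)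
    (rbar : ℝ) (hrbar : 0 ≤ rbar)
    (d : ℝ → V3) (hd : Continuous d) (hdbound : ∀ t, 0 ≤ t → ‖d t‖ ≤ rbar)
    (z : ℝ → V14)
    (hode : ∀ t, 0 ≤ t → HasDerivAt z (odeRHS A E (z t) (d t)) t)
    (α c R ρstar : ℝ)
    (hα : α = lamMin Q hQ.isHermitian) (hc : c = 2 * opPE P E)
    (hR : R = (c / α) * rbar) (hρstar : ρstar = lamMax P hP.isHermitian * R ^ 2) :
    ∀ ρ, ρstar ≤ ρ → ∀ t₀, 0 ≤ t₀ → lyapV P (z t₀) = ρ →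
      deriv (fun s => lyapV P (z s)) t₀ ≤ 0 :=
  stmt5_general A E P Q hP hQ hLyap rbar d hdbound z hode α c R ρstar hα hc hR hρstar
end
end

section
/- Let z : [0,∞) → ℝ¹⁴ be differentiable and satisfy ż(t) = A z(t) + E d(t) for all t ≥ 0, where ‖d(t)‖ ≤ r̄ for all t ≥ 0. Set α = λ_min(Q), c = 2‖P·E‖, R = (c/α) r̄, and ρ* = λ_max(P) R². Then for every ρ > ρ*, the trajectory enters the sublevel set Z_ρ = {z : V(z) ≤ ρ} in finite time: there exists T ≥ 0 such that V(z(T)) ≤ ρ. -/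
open Matrix Filter

noncomputable section

/-!
Suppose `V(z(t)) > ρ` for all `t ≥ 0`. Since `V(z) ≤ λ_max(P) ‖z‖²`, the state then stays
outside the ball of radius `s = √(ρ / λ_max(P))`, and `ρ > ρ*` gives `s > R`. Along the
ODE, `V̇ = zᵀ(AᵀP + PA)z + 2 zᵀPE d ≤ -α‖z‖² + c r̄ ‖z‖ = -α‖z‖(‖z‖ - R) ≤ -α s (s - R) < 0`,
so `V(z(t))` decreases at a uniform rate and falls below `ρ` in finite time, a contradiction.
-/

open scoped RealInnerProductSpace

namespace Matrix

variable {n m R : Type*} [Fintype n] [Fintype m]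

theorem IsSymm.dotProduct_mulVec_comm [CommSemiring R] {M : Matrix n n R} (hM : M.IsSymm)
    (x y : n → R) : x ⬝ᵥ M *ᵥ y = y ⬝ᵥ M *ᵥ x := by
  rw [← hM.eq, dotProduct_transpose_mulVec, hM.eq]

theorem IsSymm.dotProduct_transpose_mul_add_mul_mulVec_self [CommSemiring R] {P : Matrix n n R}
    (hP : P.IsSymm) (A : Matrix n n R) (x : n → R) :
    x ⬝ᵥ (Aᵀ * P + P * A) *ᵥ x = 2 * (x ⬝ᵥ (P * A) *ᵥ x) := by
  rw [add_mulVec, dotProduct_add, ← mulVec_mulVec, ← mulVec_mulVec,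
    dotProduct_transpose_mulVec, dotProduct_comm, hP.dotProduct_mulVec_comm]
  ring

variable [DecidableEq m]

theorem dotProduct_mulVec_eq_inner_toEuclideanLin (M : Matrix n m ℝ) (x : EuclideanSpace ℝ n)
    (y : EuclideanSpace ℝ m) : x ⬝ᵥ M *ᵥ y = ⟪x, toEuclideanLin M y⟫ := by
  rw [EuclideanSpace.inner_eq_star_dotProduct, star_trivial, dotProduct_comm]
  rfl

theorem dotProduct_mulVec_le_norm_mul_opNorm_mul_norm (M : Matrix n m ℝ)
    (x : EuclideanSpace ℝ n) (y : EuclideanSpace ℝ m) :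
    x ⬝ᵥ M *ᵥ y ≤ ‖x‖ * (‖LinearMap.toContinuousLinearMap (toEuclideanLin M)‖ * ‖y‖) := by
  rw [dotProduct_mulVec_eq_inner_toEuclideanLin]
  exact (real_inner_le_norm _ _).trans <| mul_le_mul_of_nonneg_left
    ((LinearMap.toContinuousLinearMap (toEuclideanLin M)).le_opNorm y) (norm_nonneg x)

end Matrix

namespace Matrix.IsHermitian

variable {n : Type*} [Fintype n] [DecidableEq n] {M : Matrix n n ℝ}

theorem dotProduct_mulVec_self_eq_sum (hM : M.IsHermitian) (x : EuclideanSpace ℝ n) :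
    x ⬝ᵥ M *ᵥ x = ∑ i, hM.eigenvalues i * ⟪hM.eigenvectorBasis i, x⟫ ^ 2 := by
  rw [dotProduct_mulVec_eq_inner_toEuclideanLin, ← hM.eigenvectorBasis.sum_inner_mul_inner]
  refine Finset.sum_congr rfl fun i _ => ?_
  have hb : toEuclideanLin M (hM.eigenvectorBasis i) =
      hM.eigenvalues i • hM.eigenvectorBasis i := by
    ext1; simp [mulVec_eigenvectorBasis]
  rw [← isSymmetric_toEuclideanLin_iff.2 hM, hb, real_inner_smul_left, real_inner_comm x]
  ring

theorem iInf_eigenvalues_mul_norm_sq_le (hM : M.IsHermitian) (x : EuclideanSpace ℝ n) :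
    (⨅ i, hM.eigenvalues i) * ‖x‖ ^ 2 ≤ x ⬝ᵥ M *ᵥ x := by
  rw [hM.dotProduct_mulVec_self_eq_sum, ← hM.eigenvectorBasis.sum_sq_norm_inner_right,
    Finset.mul_sum]
  simp only [Real.norm_eq_abs, sq_abs]
  gcongr with i
  exact ciInf_le (Finite.bddBelow_range _) i

theorem dotProduct_mulVec_self_le_iSup_eigenvalues_mul_norm_sq (hM : M.IsHermitian)
    (x : EuclideanSpace ℝ n) :
    x ⬝ᵥ M *ᵥ x ≤ (⨆ i, hM.eigenvalues i) * ‖x‖ ^ 2 := by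
  rw [hM.dotProduct_mulVec_self_eq_sum, ← hM.eigenvectorBasis.sum_sq_norm_inner_right,
    Finset.mul_sum]
  simp only [Real.norm_eq_abs, sq_abs]
  gcongr with i
  exact le_ciSup (Finite.bddAbove_range _) i

end Matrix.IsHermitian

namespace Matrix.PosDef

variable {n : Type*} [Fintype n] [DecidableEq n] [Nonempty n] {M : Matrix n n ℝ}

theorem iInf_eigenvalues_pos (hM : M.PosDef) : 0 < ⨅ i, hM.isHermitian.eigenvalues i := by
  obtain ⟨i, hi⟩ := exists_eq_ciInf_of_finite (f := hM.isHermitian.eigenvalues)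
  exact hi ▸ hM.eigenvalues_pos i

theorem iSup_eigenvalues_pos (hM : M.PosDef) : 0 < ⨆ i, hM.isHermitian.eigenvalues i :=
  (hM.eigenvalues_pos (Classical.arbitrary n)).trans_le (le_ciSup (Finite.bddAbove_range _) _)

end Matrix.PosDef

theorem HasDerivAt.dotProduct_mulVec_self {n : Type*} [Fintype n] [DecidableEq n]
    {M : Matrix n n ℝ} (hM : M.IsSymm) {x : ℝ → EuclideanSpace ℝ n} {x' : EuclideanSpace ℝ n}
    {t : ℝ} (hx : HasDerivAt x x' t) :
    HasDerivAt (fun u => x u ⬝ᵥ M *ᵥ x u) (2 * (x t ⬝ᵥ M *ᵥ x')) t := by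
  let L := LinearMap.toContinuousLinearMap (Matrix.toEuclideanLin M)
  have hquad : (fun u => x u ⬝ᵥ M *ᵥ x u) = fun u => ⟪x u, L (x u)⟫ :=
    funext fun u => Matrix.dotProduct_mulVec_eq_inner_toEuclideanLin M (x u) (x u)
  rw [hquad]
  refine (hx.inner ℝ (L.hasFDerivAt.comp_hasDerivAt t hx)).congr_deriv ?_
  change ⟪x t, toEuclideanLin M x'⟫ + ⟪x', toEuclideanLin M (x t)⟫ = _
  simp only [← Matrix.dotProduct_mulVec_eq_inner_toEuclideanLin, hM.dotProduct_mulVec_comm x']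
  ring

theorem exists_nonneg_le_of_hasDerivAt_le_neg {f f' : ℝ → ℝ} {ρ ε : ℝ} (hε : 0 < ε)
    (hf : ∀ t, 0 ≤ t → HasDerivAt f (f' t) t) (hf' : ∀ t, 0 ≤ t → ρ < f t → f' t ≤ -ε) :
    ∃ T, 0 ≤ T ∧ f T ≤ ρ := by
  by_contra! hgt
  set T := max 0 ((f 0 - ρ) / ε)
  have hT : 0 ≤ T := le_max_left _ _
  have hdecay : f T - f 0 ≤ -ε * (T - 0) := by
    refine (convex_Ici 0).image_sub_le_mul_sub_of_deriv_le
      (fun t ht => (hf t ht).continuousAt.continuousWithinAt)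
      (fun t ht => (hf t (interior_subset ht)).differentiableAt.differentiableWithinAt)
      (fun t ht => ?_) 0 Set.self_mem_Ici T hT hT
    have ht : 0 ≤ t := interior_subset ht
    exact (hf t ht).deriv ▸ hf' t ht (hgt t ht)
  have hT_large : f 0 - ρ ≤ ε * T :=
    (div_le_iff₀' hε).1 (le_max_right _ _)
  linarith [hgt T hT]

theorem lyapunov_derivative_le {n m : Type*} [Fintype n] [DecidableEq n] [Fintype m]
    [DecidableEq m] {A P Q : Matrix n n ℝ} {E : Matrix n m ℝ} (hP : P.IsSymm)
    (hQ : Q.IsHermitian) (hLyap : (-Q - (Aᵀ * P + P * A)).PosSemidef)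
    (x : EuclideanSpace ℝ n) {v : EuclideanSpace ℝ m} {r : ℝ} (hv : ‖v‖ ≤ r) :
    2 * (x ⬝ᵥ P *ᵥ (A *ᵥ x + E *ᵥ v)) ≤ -(⨅ i, hQ.eigenvalues i) * ‖x‖ ^ 2
      + 2 * ‖LinearMap.toContinuousLinearMap (Matrix.toEuclideanLin (P * E))‖ * r * ‖x‖ := by
  have hdissip : x ⬝ᵥ (Aᵀ * P + P * A) *ᵥ x ≤ -(x ⬝ᵥ Q *ᵥ x) := by
    have h := hLyap.dotProduct_mulVec_nonneg x
    simp only [Matrix.sub_mulVec, Matrix.neg_mulVec, dotProduct_sub, dotProduct_neg,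
      star_trivial] at h
    linarith
  have hcross : x ⬝ᵥ (P * E) *ᵥ v ≤
      ‖x‖ * (‖LinearMap.toContinuousLinearMap (Matrix.toEuclideanLin (P * E))‖ * r) := by
    refine ((P * E).dotProduct_mulVec_le_norm_mul_opNorm_mul_norm x v).trans ?_
    gcongr
  calc 2 * (x ⬝ᵥ P *ᵥ (A *ᵥ x + E *ᵥ v))
      = x ⬝ᵥ (Aᵀ * P + P * A) *ᵥ x + 2 * (x ⬝ᵥ (P * E) *ᵥ v) := by
        rw [hP.dotProduct_transpose_mul_add_mul_mulVec_self, Matrix.mulVec_add, dotProduct_add,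
          Matrix.mulVec_mulVec, Matrix.mulVec_mulVec]
        ring
    _ ≤ _ := by linarith [hQ.iInf_eigenvalues_mul_norm_sq_le x]

theorem stmt7_general
    (A : Matrix (Fin 14) (Fin 14) ℝ) (E : Matrix (Fin 14) (Fin 3) ℝ)
    (P Q : Matrix (Fin 14) (Fin 14) ℝ) (hP : P.PosDef) (hQ : Q.PosDef)
    (hLyap : (-Q - (Aᵀ * P + P * A)).PosSemidef)
    (rbar : ℝ)
    (d : ℝ → V3) (hdbound : ∀ t, 0 ≤ t → ‖d t‖ ≤ rbar)
    (z : ℝ → V14)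
    (hode : ∀ t, 0 ≤ t → HasDerivAt z (odeRHS A E (z t) (d t)) t)
    (α c R ρstar : ℝ)
    (hα : α = lamMin Q hQ.isHermitian) (hc : c = 2 * opPE P E)
    (hR : R = (c / α) * rbar) (hρstar : ρstar = lamMax P hP.isHermitian * R ^ 2) :
    ∀ ρ, ρstar < ρ → ∃ T, 0 ≤ T ∧ lyapV P (z T) ≤ ρ := by
  intro ρ hρ
  have hPsymm : P.IsSymm := (Matrix.conjTranspose_eq_transpose_of_trivial P).symm.trans hP.1
  have hα0 : 0 < α := hα ▸ hQ.iInf_eigenvalues_pos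
  have hαR : α * R = c * rbar := by rw [hR]; field_simp
  set μ := lamMax P hP.isHermitian
  have hμ : 0 < μ := hP.iSup_eigenvalues_pos
  have hρ0 : 0 < ρ := lt_of_le_of_lt (by rw [hρstar]; positivity) hρ
  set s := √(ρ / μ)
  have hRs : R < s := Real.lt_sqrt_of_sq_lt <| by rw [lt_div_iff₀' hμ]; linarith
  have hs0 : 0 < s := Real.sqrt_pos.2 (div_pos hρ0 hμ)
  refine exists_nonneg_le_of_hasDerivAt_le_neg (mul_pos (mul_pos hα0 hs0) (sub_pos.2 hRs))
    (fun t ht => (hode t ht).dotProduct_mulVec_self hPsymm) fun t ht hρz => ?_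
  have hsz : s < ‖z t‖ := by
    rw [← Real.sqrt_sq (norm_nonneg (z t))]
    refine Real.sqrt_lt_sqrt (div_pos hρ0 hμ).le ((div_lt_iff₀' hμ).2 ?_)
    exact hρz.trans_le (hP.isHermitian.dotProduct_mulVec_self_le_iSup_eigenvalues_mul_norm_sq _)
  calc 2 * (z t ⬝ᵥ P *ᵥ odeRHS A E (z t) (d t))
      ≤ -α * ‖z t‖ ^ 2 + c * rbar * ‖z t‖ := by
        rw [hα, hc]
        exact lyapunov_derivative_le hPsymm hQ.isHermitian hLyap (z t) (hdbound t ht)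
    _ = -(α * ‖z t‖ * (‖z t‖ - R)) := by rw [← hαR]; ring
    _ ≤ -(α * s * (s - R)) := by gcongr

/-- With `α = λ_min(Q)`, `c = 2‖P·E‖`, `R = (c/α) r̄`,
`ρ* = λ_max(P) R²`: for every `ρ > ρ*`, the trajectory enters the sublevel set
`Z_ρ = {z : V(z) ≤ ρ}` in finite time: there exists `T ≥ 0` with `V(z(T)) ≤ ρ`. -/
theorem stmt7
    (A : Matrix (Fin 14) (Fin 14) ℝ) (E : Matrix (Fin 14) (Fin 3) ℝ)
    (P Q : Matrix (Fin 14) (Fin 14) ℝ) (hP : P.PosDef) (hQ : Q.PosDef)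
    (hLyap : (-Q - (Aᵀ * P + P * A)).PosSemidef)
    (rbar : ℝ) (hrbar : 0 ≤ rbar)
    (d : ℝ → V3) (hd : Continuous d) (hdbound : ∀ t, 0 ≤ t → ‖d t‖ ≤ rbar)
    (z : ℝ → V14)
    (hode : ∀ t, 0 ≤ t → HasDerivAt z (odeRHS A E (z t) (d t)) t)
    (α c R ρstar : ℝ)
    (hα : α = lamMin Q hQ.isHermitian) (hc : c = 2 * opPE P E)
    (hR : R = (c / α) * rbar) (hρstar : ρstar = lamMax P hP.isHermitian * R ^ 2) :
    ∀ ρ, ρstar < ρ → ∃ T, 0 ≤ T ∧ lyapV P (z T) ≤ ρ :=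
  stmt7_general A E P Q hP hQ hLyap rbar d hdbound z hode α c R ρstar hα hc hR hρstar
end
end
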